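/- arXiv:2312.15835 — 11 statements merged into one kernel-verified Lean document; each statement's English description precedes it below -/
import Mathlib

section
/- Let a and b be finite sets of tokens from a linearly ordered token type, and let τ_o be a positive integer with |a ∩ b| ≥ τ_o. Then the set of the (|a| − τ_o + 1) smallest elements of a and the set of the (|b| − τ_o + 1) smallest elements of b have at least one element in common. -/
/-! The smallest common token `c` of `a` and `b` lies in both prefixes: at least `τo` tokens of
`a` are `≥ c`, so fewer than `|a| - τo + 1` tokens of `a` precede `c`, and likewise in `b`. -/

/-- The set of the `m` smallest elements of a finite set `x`
    over a linearly ordered type. -/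
def prefixSet {T : Type*} [LinearOrder T] (x : Finset T) (m : ℕ) : Finset T :=
  ((x.sort (· ≤ ·)).take m).toFinset

open Finset

theorem mem_prefixSet_of_card_filter_lt {T : Type*} [LinearOrder T] {x : Finset T} {m : ℕ}
    {c : T} (hc : c ∈ x) (hm : #{y ∈ x | y < c} < m) : c ∈ prefixSet x m := by
  by_contra hcm
  set l := x.sort (· ≤ ·)
  have hdrop : c ∈ l.drop m := by
    have hcl : c ∈ l.take m ++ l.drop m := by
      rw [List.take_append_drop]; exact (mem_sort _).2 hc
    exact (List.mem_append.1 hcl).resolve_left (by simpa [prefixSet] using hcm)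
  have hsorted : (l.take m ++ l.drop m).Pairwise (· < ·) := by
    rw [List.take_append_drop]; exact (sortedLT_sort x).pairwise
  have htake_lt : ∀ y ∈ l.take m, y < c := fun y hy =>
    (List.pairwise_append.1 hsorted).2.2 y hy c hdrop
  have hlen : (l.take m).length = m :=
    List.length_take_of_le (by have := List.length_pos_of_mem hdrop; rw [List.length_drop] at this; omega)
  have hsub : (l.take m).toFinset ⊆ {y ∈ x | y < c} := fun y hy => by
    rw [List.mem_toFinset] at hy
    exact mem_filter.2 ⟨(mem_sort _).1 (List.mem_of_mem_take hy), htake_lt y hy⟩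
  have hcard := card_le_card hsub
  rw [List.toFinset_card_of_nodup ((sort_nodup x _).sublist (List.take_sublist _ _)), hlen] at hcard
  omega

theorem card_filter_lt_min'_add_card_le {T : Type*} [LinearOrder T] {s x : Finset T}
    (hsx : s ⊆ x) (hs : s.Nonempty) : #{y ∈ x | y < s.min' hs} + #s ≤ #x := by
  have hdisj : Disjoint {y ∈ x | y < s.min' hs} s :=
    disjoint_left.2 fun y hy hys => (mem_filter.1 hy).2.not_ge (min'_le s y hys)
  rw [← card_union_of_disjoint hdisj]
  exact card_le_card (union_subset (filter_subset _ _) hsx)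

/-- Unweighted Prefix Filtering Principle. -/
theorem unweighted_prefix_filtering {T : Type*} [LinearOrder T]
    (a b : Finset T) (τo : ℕ) (hτ : 0 < τo) (h : τo ≤ (a ∩ b).card) :
    (prefixSet a (a.card - τo + 1) ∩ prefixSet b (b.card - τo + 1)).Nonempty := by
  have hne : (a ∩ b).Nonempty := card_pos.1 (hτ.trans_le h)
  have hc := mem_inter.1 ((a ∩ b).min'_mem hne)
  have ha := card_filter_lt_min'_add_card_le inter_subset_left hne
  have hb := card_filter_lt_min'_add_card_le inter_subset_right hne
  exact ⟨(a ∩ b).min' hne, mem_inter.2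
    ⟨mem_prefixSet_of_card_filter_lt hc.1 (by omega), mem_prefixSet_of_card_filter_lt hc.2 (by omega)⟩⟩
end

section
/- Let a and b be weighted token sets over a linearly ordered token type, and let τ_o > 0 be a real number with Σ_t min(a(t), b(t)) ≥ τ_o. Then there exists a token t with a(t) > 0 and b(t) > 0 such that Σ_{s < t} a(s) ≤ ω(a) − τ_o and Σ_{s < t} b(s) ≤ ω(b) − τ_o. -/
/-!
Since the overlap is positive, some token carries positive weight in both `a` and `b`; let `t` be
the least one. Every token that contributes to the overlap lies at or after `t`, so the overlap
is at most the weight of `a` (and of `b`) on `[t, ∞)`. The weight of `a` before `t` is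
therefore at most `ω(a) − τ_o`.
-/

open Function Set

section FinsumOrder

variable {α M : Type*}

theorem finsum_mem_Iio_add_finsum_mem_Ici [LinearOrder α] [AddCommMonoid M] {f : α → M}
    (hf : (support f).Finite) (t : α) :
    ∑ᶠ s ∈ Iio t, f s + ∑ᶠ s ∈ Ici t, f s = ∑ᶠ s, f s := by
  rw [← finsum_mem_union' (Iio_disjoint_Ici le_rfl) (hf.inter_of_right _)
    (hf.inter_of_right _), Iio_union_Ici, finsum_mem_univ]

theorem finsum_le_finsum_mem_of_support_subset [AddCommMonoid M] [PartialOrder M]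
    [AddLeftMono M] {f g : α → M} {s : Set α} (hf : (support f).Finite)
    (hg : (support g).Finite) (hfs : support f ⊆ s) (hfg : ∀ x ∈ s, f x ≤ g x) :
    ∑ᶠ x, f x ≤ ∑ᶠ x ∈ s, g x := by
  rw [finsum_mem_def]
  refine finsum_le_finsum' hf ((hg.inter_of_right s).subset support_indicator.subset) fun x => ?_
  by_cases hx : x ∈ s
  · rw [indicator_of_mem hx]
    exact hfg x hx
  · rw [indicator_of_notMem hx, notMem_support.1 fun hx' => hx (hfs hx')]

end FinsumOrder

theorem support_min_subset_inter {α M : Type*} [Zero M] [LinearOrder M] {a b : α → M}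
    (ha : ∀ x, 0 ≤ a x) (hb : ∀ x, 0 ≤ b x) :
    support (fun x => min (a x) (b x)) ⊆ support a ∩ support b := by
  intro x hx
  refine ⟨fun hax => hx ?_, fun hbx => hx ?_⟩ <;> dsimp only
  · rw [hax, min_eq_left (hb x)]
  · rw [hbx, min_eq_right (ha x)]

/-- Weighted Prefix Filtering Principle. -/
theorem weighted_prefix_filtering {T : Type*} [LinearOrder T] (a b : T → ℝ)
    (haf : (Function.support a).Finite) (hbf : (Function.support b).Finite)
    (ha0 : ∀ t, 0 ≤ a t) (hb0 : ∀ t, 0 ≤ b t)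
    (τo : ℝ) (hτ : 0 < τo)
    (h : τo ≤ ∑ᶠ t, min (a t) (b t)) :
    ∃ t, 0 < a t ∧ 0 < b t ∧
      (∑ᶠ s ∈ Set.Iio t, a s) ≤ (∑ᶠ s, a s) - τo ∧
      (∑ᶠ s ∈ Set.Iio t, b s) ≤ (∑ᶠ s, b s) - τo := by
  have hcommon := support_min_subset_inter ha0 hb0
  obtain ⟨x, hx⟩ : (support fun s => min (a s) (b s)).Nonempty := by
    by_contra! hempty
    rw [finsum_eq_zero_of_forall_eq_zero (congrFun (support_eq_empty_iff.1 hempty))] at h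
    linarith
  obtain ⟨t, ⟨hat, hbt⟩, ht_first⟩ := (support a ∩ support b).exists_min_image id
    (haf.subset inter_subset_left) ⟨x, hcommon hx⟩
  have hoverlap_Ici : support (fun s => min (a s) (b s)) ⊆ Ici t :=
    fun s hs => ht_first s (hcommon hs)
  have hoverlap_fin := haf.subset (hcommon.trans inter_subset_left)
  have hτa : τo ≤ ∑ᶠ s ∈ Ici t, a s := h.trans <| finsum_le_finsum_mem_of_support_subset
    hoverlap_fin haf hoverlap_Ici fun s _ => min_le_left _ _
  have hτb : τo ≤ ∑ᶠ s ∈ Ici t, b s := h.trans <| finsum_le_finsum_mem_of_support_subset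
    hoverlap_fin hbf hoverlap_Ici fun s _ => min_le_right _ _
  refine ⟨t, (ha0 t).lt_of_ne' hat, (hb0 t).lt_of_ne' hbt, ?_, ?_⟩
  · linarith [finsum_mem_Iio_add_finsum_mem_Ici haf t]
  · linarith [finsum_mem_Iio_add_finsum_mem_Ici hbf t]
end

section
/- Let a and b be finite sets of tokens from a linearly ordered token type, let τ_o be a real number, and let t ∈ a ∩ b be a common token. Write a₋ = {x ∈ a : x < t}, a₊ = {x ∈ a : x > t}, b₋ = {x ∈ b : x < t}, b₊ = {x ∈ b : x > t}. If |a ∩ b| ≥ τ_o, then |a₋ ∩ b₋| + 1 + min(|a₊|, |b₊|) ≥ τ_o. -/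
/-!
Split `a ∩ b` at `t`. The part below `t` is exactly `a₋ ∩ b₋`, and the part at or above `t` is
`t` itself together with the elements of `a ∩ b` above `t`, which lie in both `a₊` and `b₊`.
-/

namespace Finset

variable {α : Type*} [LinearOrder α]

lemma card_filter_le_le_card_filter_lt_add_one (s : Finset α) (t : α) :
    #(s.filter (t ≤ ·)) ≤ #(s.filter (t < ·)) + 1 := by
  have hsub : s.filter (t ≤ ·) ⊆ insert t (s.filter (t < ·)) := by
    intro x hx
    rw [mem_filter] at hx
    rw [mem_insert, mem_filter]
    rcases hx.2.eq_or_lt with rfl | hlt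
    · exact Or.inl rfl
    · exact Or.inr ⟨hx.1, hlt⟩
  exact (card_le_card hsub).trans (card_insert_le _ _)

lemma card_inter_le_card_filter_lt_inter_add_one_add_min (a b : Finset α) (t : α) :
    #(a ∩ b) ≤ #(a.filter (· < t) ∩ b.filter (· < t)) + 1 +
      min #(a.filter (t < ·)) #(b.filter (t < ·)) := by
  have hbelow : (a ∩ b).filter (· < t) = a.filter (· < t) ∩ b.filter (· < t) :=
    filter_inter_distrib _ _ _
  have habove : #((a ∩ b).filter (t < ·)) ≤ min #(a.filter (t < ·)) #(b.filter (t < ·)) :=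
    le_min (card_le_card (filter_subset_filter _ inter_subset_left))
      (card_le_card (filter_subset_filter _ inter_subset_right))
  calc #(a ∩ b) = #((a ∩ b).filter (· < t)) + #((a ∩ b).filter (t ≤ ·)) := by
        simp only [← not_lt]
        exact (card_filter_add_card_filter_not _).symm
    _ ≤ #((a ∩ b).filter (· < t)) + (#((a ∩ b).filter (t < ·)) + 1) :=
        Nat.add_le_add_left (card_filter_le_le_card_filter_lt_add_one _ t) _
    _ ≤ _ := by rw [hbelow]; omega

end Finset

theorem unweighted_positional_filtering_general {T : Type*} [LinearOrder T]
    (a b : Finset T) (τo : ℝ) (t : T)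
    (h : τo ≤ ((a ∩ b).card : ℝ)) :
    τo ≤ (((a.filter (fun x => x < t)) ∩ (b.filter (fun x => x < t))).card : ℝ) + 1 +
      min (((a.filter (fun x => t < x)).card : ℝ))
          (((b.filter (fun x => t < x)).card : ℝ)) := by
  refine h.trans ?_
  exact_mod_cast Finset.card_inter_le_card_filter_lt_inter_add_one_add_min a b t

/-- Unweighted Positional Filtering Principle. -/
theorem unweighted_positional_filtering {T : Type*} [LinearOrder T]
    (a b : Finset T) (τo : ℝ) (t : T) (ht : t ∈ a ∩ b)
    (h : τo ≤ ((a ∩ b).card : ℝ)) :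
    τo ≤ (((a.filter (fun x => x < t)) ∩ (b.filter (fun x => x < t))).card : ℝ) + 1 +
      min (((a.filter (fun x => t < x)).card : ℝ))
          (((b.filter (fun x => t < x)).card : ℝ)) :=
  unweighted_positional_filtering_general a b τo t h
end

section
/- Let a and b be weighted token sets over a linearly ordered token type, let τ_o be a real number, and let t be a token with a(t) > 0 and b(t) > 0. If Σ_s min(a(s), b(s)) ≥ τ_o, then Σ_{s < t} min(a(s), b(s)) + min(a(t), b(t)) + min( Σ_{s > t} a(s), Σ_{s > t} b(s) ) ≥ τ_o. -/
open Set

section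

variable {α M : Type*} [AddCommMonoid M]

theorem finsum_eq_finsum_mem_Iio_add_add_finsum_mem_Ioi [LinearOrder α] {f : α → M}
    (hf : f.HasFiniteSupport) (t : α) :
    ∑ᶠ i, f i = (∑ᶠ i ∈ Iio t, f i) + f t + ∑ᶠ i ∈ Ioi t, f i := by
  rw [← finsum_mem_univ, ← Iic_union_Ioi (a := t), finsum_mem_union' (Iic_disjoint_Ioi le_rfl)
    (hf.inter_of_right _) (hf.inter_of_right _), ← Iio_insert,
    finsum_mem_insert' f self_notMem_Iio (hf.inter_of_right _), add_comm (f t)]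

theorem finsum_mem_le_finsum_mem [PartialOrder M] [IsOrderedAddMonoid M] {f g : α → M}
    (hf : f.HasFiniteSupport) (hg : g.HasFiniteSupport) {s : Set α} (h : ∀ i ∈ s, f i ≤ g i) :
    ∑ᶠ i ∈ s, f i ≤ ∑ᶠ i ∈ s, g i := by
  rw [finsum_mem_def, finsum_mem_def]
  exact finsum_le_finsum' ((hf.inter_of_right s).subset support_indicator.le)
    ((hg.inter_of_right s).subset support_indicator.le) fun i => indicator_le_indicator' (h i)

theorem finsum_mem_min_le_min [LinearOrder M] [IsOrderedAddMonoid M] {f g : α → M}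
    (hf : f.HasFiniteSupport) (hg : g.HasFiniteSupport) (s : Set α) :
    ∑ᶠ i ∈ s, min (f i) (g i) ≤ min (∑ᶠ i ∈ s, f i) (∑ᶠ i ∈ s, g i) :=
  le_min (finsum_mem_le_finsum_mem (hf.min hg) hf fun _ _ => min_le_left _ _)
    (finsum_mem_le_finsum_mem (hf.min hg) hg fun _ _ => min_le_right _ _)

end

theorem weighted_positional_filtering_general {T : Type*} [LinearOrder T] (a b : T → ℝ)
    (haf : (Function.support a).Finite) (hbf : (Function.support b).Finite)
    (τo : ℝ) (t : T)
    (h : τo ≤ ∑ᶠ s, min (a s) (b s)) :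
    τo ≤ (∑ᶠ s ∈ Set.Iio t, min (a s) (b s)) + min (a t) (b t) +
      min (∑ᶠ s ∈ Set.Ioi t, a s) (∑ᶠ s ∈ Set.Ioi t, b s) :=
  calc τo ≤ ∑ᶠ s, min (a s) (b s) := h
    _ = (∑ᶠ s ∈ Iio t, min (a s) (b s)) + min (a t) (b t) +
        ∑ᶠ s ∈ Ioi t, min (a s) (b s) :=
      finsum_eq_finsum_mem_Iio_add_add_finsum_mem_Ioi (Function.HasFiniteSupport.min haf hbf) t
    _ ≤ _ := add_le_add_right (finsum_mem_min_le_min haf hbf _) _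

/-- Weighted Positional Filtering Principle. -/
theorem weighted_positional_filtering {T : Type*} [LinearOrder T] (a b : T → ℝ)
    (haf : (Function.support a).Finite) (hbf : (Function.support b).Finite)
    (ha0 : ∀ t, 0 ≤ a t) (hb0 : ∀ t, 0 ≤ b t)
    (τo : ℝ) (t : T) (hat : 0 < a t) (hbt : 0 < b t)
    (h : τo ≤ ∑ᶠ s, min (a s) (b s)) :
    τo ≤ (∑ᶠ s ∈ Set.Iio t, min (a s) (b s)) + min (a t) (b t) +
      min (∑ᶠ s ∈ Set.Ioi t, a s) (∑ᶠ s ∈ Set.Ioi t, b s) :=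
  weighted_positional_filtering_general a b haf hbf τo t h
end

section
/- Let a and b be finite nonempty sets and let 0 < τ ≤ 1 be a real number. If the Cosine set similarity |a ∩ b| / √(|a| · |b|) is at least τ, then |a ∩ b| ≥ τ² · |a|, and moreover τ² · |a| ≤ |b| ≤ |a| / τ². -/
/-!
Squaring `τ ≤ |a ∩ b| / √(|a| |b|)` gives `τ² |a| |b| ≤ |a ∩ b|²`, and `|a ∩ b| ≤ |b|` lets one
factor `|b|` be cancelled, leaving `τ² |a| ≤ |a ∩ b| ≤ |b|`. The same argument with `a` and `b`
exchanged gives `τ² |b| ≤ |a|`.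
-/

open Finset

lemma sq_mul_le_sq_of_le_div_sqrt {τ i x : ℝ} (hτ : 0 < τ) (h : τ ≤ i / √x) :
    τ ^ 2 * x ≤ i ^ 2 := by
  have hsqrt : 0 < √x := by
    by_contra! hle
    rw [le_antisymm hle (Real.sqrt_nonneg x), div_zero] at h
    linarith
  have hx : 0 ≤ x := Real.sqrt_pos.1 hsqrt |>.le
  calc τ ^ 2 * x = (τ * √x) ^ 2 := by rw [mul_pow, Real.sq_sqrt hx]
    _ ≤ i ^ 2 := pow_le_pow_left₀ (by positivity) ((le_div_iff₀ hsqrt).1 h) 2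

namespace Finset

variable {α : Type*} [DecidableEq α]

noncomputable def cosineSim (a b : Finset α) : ℝ := #(a ∩ b) / √(#a * #b)

lemma cosineSim_comm (a b : Finset α) : cosineSim a b = cosineSim b a := by
  rw [cosineSim, cosineSim, inter_comm, mul_comm]

lemma nonempty_inter_of_cosineSim_pos {a b : Finset α} (h : 0 < cosineSim a b) :
    (a ∩ b).Nonempty := by
  rw [← card_pos]
  by_contra hzero
  simp_all [cosineSim]

lemma sq_mul_card_le_card_inter_of_le_cosineSim {a b : Finset α} {τ : ℝ} (hτ : 0 < τ)
    (h : τ ≤ cosineSim a b) : τ ^ 2 * #a ≤ #(a ∩ b) := by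
  have hb : (0 : ℝ) < #b := by
    exact_mod_cast card_pos.2 ((nonempty_inter_of_cosineSim_pos (hτ.trans_le h)).mono
      inter_subset_right)
  have hib : (#(a ∩ b) : ℝ) ≤ #b := by exact_mod_cast card_le_card inter_subset_right
  have hsq : τ ^ 2 * #a * #b ≤ #(a ∩ b) * #b :=
    calc τ ^ 2 * #a * #b = τ ^ 2 * (#a * #b) := mul_assoc _ _ _
      _ ≤ #(a ∩ b) ^ 2 := sq_mul_le_sq_of_le_div_sqrt hτ h
      _ ≤ #(a ∩ b) * #b := by rw [sq]; gcongr
  exact le_of_mul_le_mul_right hsq hb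

end Finset

theorem cosine_overlap_and_size_bounds_general {α : Type*} [DecidableEq α]
    (a b : Finset α)
    (τ : ℝ) (hτ0 : 0 < τ)
    (h : τ ≤ ((a ∩ b).card : ℝ) / Real.sqrt ((a.card : ℝ) * (b.card : ℝ))) :
    τ ^ 2 * (a.card : ℝ) ≤ ((a ∩ b).card : ℝ) ∧
      τ ^ 2 * (a.card : ℝ) ≤ (b.card : ℝ) ∧
      (b.card : ℝ) ≤ (a.card : ℝ) / τ ^ 2 := by
  have hab : τ ^ 2 * a.card ≤ (a ∩ b).card := sq_mul_card_le_card_inter_of_le_cosineSim hτ0 h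
  have hba : τ ^ 2 * b.card ≤ (b ∩ a).card :=
    sq_mul_card_le_card_inter_of_le_cosineSim hτ0 (cosineSim_comm a b ▸ h)
  refine ⟨hab, hab.trans (mod_cast card_le_card inter_subset_right), ?_⟩
  rw [le_div_iff₀' (by positivity)]
  exact hba.trans (mod_cast card_le_card inter_subset_right)

/-- Cosine overlap lower bound and size filter bounds. -/
theorem cosine_overlap_and_size_bounds {α : Type*} [DecidableEq α]
    (a b : Finset α) (ha : a.Nonempty) (hb : b.Nonempty)
    (τ : ℝ) (hτ0 : 0 < τ) (hτ1 : τ ≤ 1)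
    (h : τ ≤ ((a ∩ b).card : ℝ) / Real.sqrt ((a.card : ℝ) * (b.card : ℝ))) :
    τ ^ 2 * (a.card : ℝ) ≤ ((a ∩ b).card : ℝ) ∧
      τ ^ 2 * (a.card : ℝ) ≤ (b.card : ℝ) ∧
      (b.card : ℝ) ≤ (a.card : ℝ) / τ ^ 2 :=
  cosine_overlap_and_size_bounds_general a b τ hτ0 h
end

section
/- Let a and b be finite nonempty sets and let 0 < τ ≤ 1 be a real number. If the Dice similarity 2|a ∩ b| / (|a| + |b|) is at least τ, then |a ∩ b| ≥ (τ / (2 − τ)) · |a|, and moreover (τ / (2 − τ)) · |a| ≤ |b| ≤ ((2 − τ) / τ) · |a|. -/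
/-!
Clearing the denominator turns `sim_D(a, b) ≥ τ` into `τ (|a| + |b|) ≤ 2 |a ∩ b|`. Since
`|a ∩ b| ≤ |b|`, this gives `τ |a| ≤ (2 - τ) |a ∩ b|`, which is the overlap bound and, with
`|a ∩ b| ≤ |b|` once more, the lower size bound. The same argument with `a` and `b` exchanged
gives `τ |b| ≤ (2 - τ) |a ∩ b| ≤ (2 - τ) |a|`, the upper size bound.
-/

open Finset

lemma mul_le_two_sub_mul_of_mul_add_le {τ x y o : ℝ} (hτ : 0 ≤ τ) (hoy : o ≤ y)
    (h : τ * (x + y) ≤ 2 * o) : τ * x ≤ (2 - τ) * o := by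
  nlinarith

lemma Finset.mul_card_add_card_le_of_le_dice {α : Type*} [DecidableEq α] {a b : Finset α}
    {τ : ℝ} (hτ : 0 < τ) (h : τ ≤ 2 * (#(a ∩ b) : ℝ) / (#a + #b)) :
    τ * (#a + #b) ≤ 2 * (#(a ∩ b) : ℝ) := by
  have hpos : (0 : ℝ) < #a + #b := by
    by_contra! hle
    have hzero : (#a + #b : ℝ) = 0 := le_antisymm hle (by positivity)
    rw [hzero, div_zero] at h
    linarith
  rwa [le_div_iff₀ hpos] at h

theorem dice_overlap_and_size_bounds_general {α : Type*} [DecidableEq α]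
    (a b : Finset α)
    (τ : ℝ) (hτ0 : 0 < τ) (hτ1 : τ ≤ 1)
    (h : τ ≤ 2 * ((a ∩ b).card : ℝ) / ((a.card : ℝ) + (b.card : ℝ))) :
    (τ / (2 - τ)) * (a.card : ℝ) ≤ ((a ∩ b).card : ℝ) ∧
      (τ / (2 - τ)) * (a.card : ℝ) ≤ (b.card : ℝ) ∧
      (b.card : ℝ) ≤ ((2 - τ) / τ) * (a.card : ℝ) := by
  have hinter_a : (#(a ∩ b) : ℝ) ≤ #a := mod_cast card_le_card inter_subset_left
  have hinter_b : (#(a ∩ b) : ℝ) ≤ #b := mod_cast card_le_card inter_subset_right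
  have hdice := mul_card_add_card_le_of_le_dice hτ0 h
  have hoverlap_a : τ * #a ≤ (2 - τ) * #(a ∩ b) :=
    mul_le_two_sub_mul_of_mul_add_le hτ0.le hinter_b hdice
  have hoverlap_b : τ * #b ≤ (2 - τ) * #(a ∩ b) :=
    mul_le_two_sub_mul_of_mul_add_le hτ0.le hinter_a (by linarith)
  have hτ2 : 0 < 2 - τ := by linarith
  refine ⟨?_, ?_, ?_⟩
  · rw [div_mul_eq_mul_div, div_le_iff₀ hτ2]; linarith
  · rw [div_mul_eq_mul_div, div_le_iff₀ hτ2]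
    linarith [mul_le_mul_of_nonneg_left hinter_b hτ2.le]
  · rw [div_mul_eq_mul_div, le_div_iff₀ hτ0]
    linarith [mul_le_mul_of_nonneg_left hinter_a hτ2.le]

/-- Dice overlap lower bound and size filter bounds. -/
theorem dice_overlap_and_size_bounds {α : Type*} [DecidableEq α]
    (a b : Finset α) (ha : a.Nonempty) (hb : b.Nonempty)
    (τ : ℝ) (hτ0 : 0 < τ) (hτ1 : τ ≤ 1)
    (h : τ ≤ 2 * ((a ∩ b).card : ℝ) / ((a.card : ℝ) + (b.card : ℝ))) :
    (τ / (2 - τ)) * (a.card : ℝ) ≤ ((a ∩ b).card : ℝ) ∧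
      (τ / (2 - τ)) * (a.card : ℝ) ≤ (b.card : ℝ) ∧
      (b.card : ℝ) ≤ ((2 - τ) / τ) * (a.card : ℝ) :=
  dice_overlap_and_size_bounds_general a b τ hτ0 hτ1 h
end

section
/- Let a and b be weighted token sets with ω(a) > 0 and ω(b) > 0, and let 0 < τ ≤ 1 be a real number. If the weighted Jaccard similarity Σ_t min(a(t), b(t)) / Σ_t max(a(t), b(t)) is at least τ, then Σ_t min(a(t), b(t)) ≥ τ · ω(a), and moreover τ · ω(a) ≤ ω(b) ≤ ω(a) / τ. -/
/-! Pointwise `min a b ≤ a, b ≤ max a b`, so the threshold `τ · Σ max ≤ Σ min` squeezes both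
`τ · ω(a)` and `τ · ω(b)` below `Σ min`, which is at most `ω(a)` and `ω(b)`. -/

section FinsumMinMax

variable {T M : Type*} [AddCommMonoid M] [LinearOrder M] [IsOrderedAddMonoid M] {a b : T → M}

theorem finsum_min_le_left (ha : a.HasFiniteSupport) (hb : b.HasFiniteSupport) :
    ∑ᶠ t, min (a t) (b t) ≤ ∑ᶠ t, a t :=
  finsum_le_finsum' (ha.min hb) ha fun t ↦ min_le_left (a t) (b t)

theorem finsum_min_le_right (ha : a.HasFiniteSupport) (hb : b.HasFiniteSupport) :
    ∑ᶠ t, min (a t) (b t) ≤ ∑ᶠ t, b t :=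
  finsum_le_finsum' (ha.min hb) hb fun t ↦ min_le_right (a t) (b t)

theorem finsum_le_finsum_max_left (ha : a.HasFiniteSupport) (hb : b.HasFiniteSupport) :
    ∑ᶠ t, a t ≤ ∑ᶠ t, max (a t) (b t) :=
  finsum_le_finsum' ha (ha.max hb) fun t ↦ le_max_left (a t) (b t)

theorem finsum_le_finsum_max_right (ha : a.HasFiniteSupport) (hb : b.HasFiniteSupport) :
    ∑ᶠ t, b t ≤ ∑ᶠ t, max (a t) (b t) :=
  finsum_le_finsum' hb (ha.max hb) fun t ↦ le_max_right (a t) (b t)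

end FinsumMinMax

theorem weighted_jaccard_overlap_and_size_bounds_general {T : Type*} (a b : T → ℝ)
    (haf : (Function.support a).Finite) (hbf : (Function.support b).Finite)
    (hωa : 0 < ∑ᶠ t, a t)
    (τ : ℝ) (hτ0 : 0 < τ)
    (h : τ ≤ (∑ᶠ t, min (a t) (b t)) / (∑ᶠ t, max (a t) (b t))) :
    τ * (∑ᶠ t, a t) ≤ (∑ᶠ t, min (a t) (b t)) ∧
      τ * (∑ᶠ t, a t) ≤ (∑ᶠ t, b t) ∧
      (∑ᶠ t, b t) ≤ (∑ᶠ t, a t) / τ := by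
  have ha_max := finsum_le_finsum_max_left haf hbf
  have hb_max := finsum_le_finsum_max_right haf hbf
  have hmax_min : τ * ∑ᶠ t, max (a t) (b t) ≤ ∑ᶠ t, min (a t) (b t) :=
    (le_div_iff₀ (hωa.trans_le ha_max)).1 h
  have hoverlap : τ * ∑ᶠ t, a t ≤ ∑ᶠ t, min (a t) (b t) :=
    (mul_le_mul_of_nonneg_left ha_max hτ0.le).trans hmax_min
  refine ⟨hoverlap, hoverlap.trans (finsum_min_le_right haf hbf), ?_⟩
  rw [le_div_iff₀' hτ0]
  calc τ * ∑ᶠ t, b t ≤ τ * ∑ᶠ t, max (a t) (b t) := mul_le_mul_of_nonneg_left hb_max hτ0.le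
    _ ≤ ∑ᶠ t, min (a t) (b t) := hmax_min
    _ ≤ ∑ᶠ t, a t := finsum_min_le_left haf hbf

/-- Weighted Jaccard overlap lower bound and size filter bounds. -/
theorem weighted_jaccard_overlap_and_size_bounds {T : Type*} (a b : T → ℝ)
    (haf : (Function.support a).Finite) (hbf : (Function.support b).Finite)
    (ha0 : ∀ t, 0 ≤ a t) (hb0 : ∀ t, 0 ≤ b t)
    (hωa : 0 < ∑ᶠ t, a t) (hωb : 0 < ∑ᶠ t, b t)
    (τ : ℝ) (hτ0 : 0 < τ) (hτ1 : τ ≤ 1)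
    (h : τ ≤ (∑ᶠ t, min (a t) (b t)) / (∑ᶠ t, max (a t) (b t))) :
    τ * (∑ᶠ t, a t) ≤ (∑ᶠ t, min (a t) (b t)) ∧
      τ * (∑ᶠ t, a t) ≤ (∑ᶠ t, b t) ∧
      (∑ᶠ t, b t) ≤ (∑ᶠ t, a t) / τ :=
  weighted_jaccard_overlap_and_size_bounds_general a b haf hbf hωa τ hτ0 h
end

section
/- Let a and b be weighted token sets with ω(a) > 0 and ω(b) > 0, and let 0 < τ ≤ 1 be a real number. If the weighted Jaccard similarity Σ_t min(a(t), b(t)) / Σ_t max(a(t), b(t)) is at least τ, then Σ_t min(a(t), b(t)) ≥ (τ / (τ + 1)) · (ω(a) + ω(b)). -/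
open Function

theorem finsum_min_add_finsum_max {α M : Type*} [AddCommMonoid M] [LinearOrder M] {f g : α → M}
    (hf : HasFiniteSupport f) (hg : HasFiniteSupport g) :
    ∑ᶠ a, min (f a) (g a) + ∑ᶠ a, max (f a) (g a) = ∑ᶠ a, f a + ∑ᶠ a, g a := by
  rw [← finsum_add_distrib (hf.min hg) (hf.max hg), ← finsum_add_distrib hf hg]
  exact finsum_congr fun a => min_add_max (f a) (g a)

theorem finsum_le_finsum_max_left_s12 {α M : Type*} [AddCommMonoid M] [LinearOrder M] [AddLeftMono M]
    {f g : α → M} (hf : HasFiniteSupport f) (hg : HasFiniteSupport g) :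
    ∑ᶠ a, f a ≤ ∑ᶠ a, max (f a) (g a) :=
  finsum_le_finsum' hf (hf.max hg) fun a => le_max_left (f a) (g a)

theorem div_add_one_mul_add_le_of_le_div {K : Type*} [Field K] [LinearOrder K]
    [IsStrictOrderedRing K] {τ m x : K} (hτ : 0 < τ + 1) (hx : 0 < x) (h : τ ≤ m / x) :
    τ / (τ + 1) * (m + x) ≤ m := by
  have hτx : τ * x ≤ m := (le_div_iff₀ hx).mp h
  rw [div_mul_eq_mul_div, div_le_iff₀ hτ]
  linarith

theorem weighted_jaccard_equivalent_overlap_general {T : Type*} (a b : T → ℝ)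
    (haf : (Function.support a).Finite) (hbf : (Function.support b).Finite)
    (hωa : 0 < ∑ᶠ t, a t)
    (τ : ℝ) (hτ0 : 0 < τ)
    (h : τ ≤ (∑ᶠ t, min (a t) (b t)) / (∑ᶠ t, max (a t) (b t))) :
    (τ / (τ + 1)) * ((∑ᶠ t, a t) + (∑ᶠ t, b t)) ≤ (∑ᶠ t, min (a t) (b t)) := by
  have hmax : 0 < ∑ᶠ t, max (a t) (b t) := hωa.trans_le (finsum_le_finsum_max_left_s12 haf hbf)
  rw [← finsum_min_add_finsum_max haf hbf]
  exact div_add_one_mul_add_le_of_le_div (by linarith) hmax h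

/-- Weighted Jaccard equivalent overlap for the positional filter. -/
theorem weighted_jaccard_equivalent_overlap {T : Type*} (a b : T → ℝ)
    (haf : (Function.support a).Finite) (hbf : (Function.support b).Finite)
    (ha0 : ∀ t, 0 ≤ a t) (hb0 : ∀ t, 0 ≤ b t)
    (hωa : 0 < ∑ᶠ t, a t) (hωb : 0 < ∑ᶠ t, b t)
    (τ : ℝ) (hτ0 : 0 < τ) (hτ1 : τ ≤ 1)
    (h : τ ≤ (∑ᶠ t, min (a t) (b t)) / (∑ᶠ t, max (a t) (b t))) :
    (τ / (τ + 1)) * ((∑ᶠ t, a t) + (∑ᶠ t, b t)) ≤ (∑ᶠ t, min (a t) (b t)) :=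
  weighted_jaccard_equivalent_overlap_general a b haf hbf hωa τ hτ0 h
end

section
/- Let a and b be weighted token sets over a linearly ordered token type, with Σ_t b(t)² = 1, and let t₀ be a token such that a(s) · b(s) = 0 for all s < t₀. Let 0 < τ ≤ 1 be a real number. If Σ_t a(t) · b(t) ≥ τ, then √(Σ_{s ≥ t₀} a(s)²) ≥ τ; if additionally Σ_t a(t)² = 1, then √(Σ_{s < t₀} a(s)²) ≤ √(1 − τ²). -/
/-!
Since `a s * b s = 0` below `t₀`, the dot product of `a` and `b` only sees the suffix of `a`
from `t₀` on, so Cauchy–Schwarz against the unit vector `b` gives `τ ≤ ‖a|_{≥ t₀}‖`.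
When `a` is a unit vector too, the prefix and suffix squared norms add up to `1`, so the
prefix squared norm is at most `1 - τ ^ 2`.
-/

section

open Function Set

variable {ι : Type*} {f g : ι → ℝ}

theorem finsum_mul_le_sqrt_mul_sqrt (hf : (support f).Finite) (hg : (support g).Finite) :
    ∑ᶠ i, f i * g i ≤ √(∑ᶠ i, f i ^ 2) * √(∑ᶠ i, g i ^ 2) := by
  classical
  set F := hf.toFinset ∪ hg.toFinset
  have hfF : support f ⊆ F := by simp [F]
  have hgF : support g ⊆ F := by simp [F]
  rw [finsum_eq_sum_of_support_subset _ ((support_mul_subset_left f g).trans hfF),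
    finsum_eq_sum_of_support_subset _ ((support_pow f two_ne_zero).trans_subset hfF),
    finsum_eq_sum_of_support_subset _ ((support_pow g two_ne_zero).trans_subset hgF)]
  exact Real.sum_mul_le_sqrt_mul_sqrt F f g

theorem finsum_mul_le_sqrt_finsum_mem_mul_sqrt (s : Set ι) (hf : (support f).Finite)
    (hg : (support g).Finite) (hfg : support (fun i ↦ f i * g i) ⊆ s) :
    ∑ᶠ i, f i * g i ≤ √(∑ᶠ i ∈ s, f i ^ 2) * √(∑ᶠ i, g i ^ 2) := by
  have hrestrict : ∑ᶠ i, s.indicator f i * g i = ∑ᶠ i, f i * g i := by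
    simp_rw [← indicator_mul_left, indicator_eq_self.2 hfg]
  have hsq : ∑ᶠ i ∈ s, f i ^ 2 = ∑ᶠ i, s.indicator f i ^ 2 := by
    rw [finsum_mem_def]
    exact finsum_congr fun i ↦ by by_cases hi : i ∈ s <;> simp [hi]
  rw [← hrestrict, hsq]
  exact finsum_mul_le_sqrt_mul_sqrt
    (hf.subset (support_indicator.trans_subset inter_subset_right)) hg

theorem finsum_mem_add_finsum_mem_compl (s : Set ι) (hf : (support f).Finite) :
    ∑ᶠ i ∈ s, f i + ∑ᶠ i ∈ sᶜ, f i = ∑ᶠ i, f i := by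
  simpa [← finsum_mem_univ] using
    finsum_mem_inter_add_sdiff' (s := univ) s (by simpa using hf)

end

theorem l2ap_cosine_bounds_general {T : Type*} [LinearOrder T] (a b : T → ℝ)
    (haf : (Function.support a).Finite) (hbf : (Function.support b).Finite)
    (hb2 : (∑ᶠ t, (b t) ^ 2) = 1)
    (t₀ : T) (hpre : ∀ s, s < t₀ → a s * b s = 0)
    (τ : ℝ) (hτ0 : 0 < τ)
    (h : τ ≤ ∑ᶠ t, a t * b t) :
    τ ≤ Real.sqrt (∑ᶠ s ∈ Set.Ici t₀, (a s) ^ 2) ∧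
      ((∑ᶠ t, (a t) ^ 2) = 1 →
        Real.sqrt (∑ᶠ s ∈ Set.Iio t₀, (a s) ^ 2) ≤ Real.sqrt (1 - τ ^ 2)) := by
  have hsupp : Function.support (fun s ↦ a s * b s) ⊆ Set.Ici t₀ := fun s hs ↦
    not_lt.1 fun hlt ↦ hs (hpre s hlt)
  have hsuffix : τ ≤ √(∑ᶠ s ∈ Set.Ici t₀, a s ^ 2) := by
    calc τ ≤ ∑ᶠ t, a t * b t := h
      _ ≤ √(∑ᶠ s ∈ Set.Ici t₀, a s ^ 2) * √(∑ᶠ t, b t ^ 2) :=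
        finsum_mul_le_sqrt_finsum_mem_mul_sqrt _ haf hbf hsupp
      _ = √(∑ᶠ s ∈ Set.Ici t₀, a s ^ 2) := by rw [hb2, Real.sqrt_one, mul_one]
  refine ⟨hsuffix, fun ha2 ↦ Real.sqrt_le_sqrt ?_⟩
  have hsplit := finsum_mem_add_finsum_mem_compl (Set.Ici t₀)
    (haf.subset (Function.support_pow a two_ne_zero).subset)
  rw [Set.compl_Ici, ha2] at hsplit
  linarith [(Real.le_sqrt' hτ0).1 hsuffix]

/-- L2AP prefix/suffix bound for Cosine similarity (Cauchy–Schwarz based). -/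
theorem l2ap_cosine_bounds {T : Type*} [LinearOrder T] (a b : T → ℝ)
    (haf : (Function.support a).Finite) (hbf : (Function.support b).Finite)
    (ha0 : ∀ t, 0 ≤ a t) (hb0 : ∀ t, 0 ≤ b t)
    (hb2 : (∑ᶠ t, (b t) ^ 2) = 1)
    (t₀ : T) (hpre : ∀ s, s < t₀ → a s * b s = 0)
    (τ : ℝ) (hτ0 : 0 < τ) (hτ1 : τ ≤ 1)
    (h : τ ≤ ∑ᶠ t, a t * b t) :
    τ ≤ Real.sqrt (∑ᶠ s ∈ Set.Ici t₀, (a s) ^ 2) ∧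
      ((∑ᶠ t, (a t) ^ 2) = 1 →
        Real.sqrt (∑ᶠ s ∈ Set.Iio t₀, (a s) ^ 2) ≤ Real.sqrt (1 - τ ^ 2)) :=
  l2ap_cosine_bounds_general a b haf hbf hb2 t₀ hpre τ hτ0 h
end

section
/- Let a and b be weighted token sets over a linearly ordered token type with ω(a) > 0 and ω(b) > 0, let 0 < τ ≤ 1 be a real number, and let t₀ be a token with a(t₀) > 0 and b(t₀) > 0 such that min(a(s), b(s)) = 0 for all s < t₀. Write p_a = Σ_{s < t₀} a(s), s_a = Σ_{s ≥ t₀} a(s), p_b = Σ_{s < t₀} b(s), s_b = Σ_{s ≥ t₀} b(s). If the weighted Dice similarity 2·Σ_t min(a(t), b(t)) / (ω(a) + ω(b)) is at least τ, then s_b ≥ (τ / (2 − τ)) · (ω(a) + p_b) and s_b ≤ ((2 − τ) / τ) · s_a − p_a − p_b. -/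
/-!
Since `a` and `b` share no weight before `t₀`, their overlap `I = Σ min (a t) (b t)` lives on
the suffix, so `I ≤ s_a` and `I ≤ s_b`. The Dice condition reads `τ (ω(a) + ω(b)) ≤ 2 I`;
writing `ω = p + s` and bounding `2 I` by `2 s_b`, respectively `2 s_a`, gives the two bounds
after moving the terms with `τ` to one side.
-/

open Function Set

section Finsum

variable {T M : Type*}

theorem finsum_mem_le_finsum_mem_s16 [AddCommMonoid M] [PartialOrder M] [AddLeftMono M]
    {f g : T → M} (hf : (support f).Finite) (hg : (support g).Finite) (s : Set T)
    (hfg : ∀ t ∈ s, f t ≤ g t) :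
    ∑ᶠ t ∈ s, f t ≤ ∑ᶠ t ∈ s, g t := by
  rw [finsum_mem_def, finsum_mem_def]
  refine finsum_le_finsum' ((hf.inter_of_right s).subset support_indicator.subset)
    ((hg.inter_of_right s).subset support_indicator.subset) fun t => ?_
  by_cases ht : t ∈ s
  · simpa [indicator_of_mem ht] using hfg t ht
  · simp [indicator_of_notMem ht]

variable [LinearOrder T]

theorem finsum_eq_finsum_mem_Iio_add_finsum_mem_Ici [AddCommMonoid M] {f : T → M}
    (hf : (support f).Finite) (t₀ : T) :
    ∑ᶠ t, f t = ∑ᶠ t ∈ Iio t₀, f t + ∑ᶠ t ∈ Ici t₀, f t := by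
  rw [← finsum_mem_univ, ← Iio_union_Ici (a := t₀),
    finsum_mem_union' (Iio_disjoint_Ici le_rfl) (hf.inter_of_right _) (hf.inter_of_right _)]

variable [AddCommMonoid M] [LinearOrder M] [AddLeftMono M]

theorem finsum_min_le_finsum_mem_Ici_left {a b : T → M} (ha : (support a).Finite)
    (hb : (support b).Finite) {t₀ : T} (hpre : ∀ s, s < t₀ → min (a s) (b s) = 0) :
    ∑ᶠ t, min (a t) (b t) ≤ ∑ᶠ t ∈ Ici t₀, a t := by
  have hmin : (support fun t => min (a t) (b t)).Finite := (ha.union hb).subset (support_min a b)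
  calc ∑ᶠ t, min (a t) (b t)
      = ∑ᶠ t ∈ Iio t₀, min (a t) (b t) + ∑ᶠ t ∈ Ici t₀, min (a t) (b t) :=
        finsum_eq_finsum_mem_Iio_add_finsum_mem_Ici hmin t₀
    _ = ∑ᶠ t ∈ Ici t₀, min (a t) (b t) := by
        rw [finsum_mem_of_eqOn_zero fun s (hs : s ∈ Iio t₀) => hpre s hs, zero_add]
    _ ≤ ∑ᶠ t ∈ Ici t₀, a t :=
        finsum_mem_le_finsum_mem_s16 hmin ha _ fun t _ => min_le_left _ _

theorem finsum_min_le_finsum_mem_Ici_right {a b : T → M} (ha : (support a).Finite)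
    (hb : (support b).Finite) {t₀ : T} (hpre : ∀ s, s < t₀ → min (a s) (b s) = 0) :
    ∑ᶠ t, min (a t) (b t) ≤ ∑ᶠ t ∈ Ici t₀, b t := by
  simp_rw [min_comm (a _)] at hpre ⊢
  exact finsum_min_le_finsum_mem_Ici_left hb ha hpre

end Finsum

theorem pps_dice_suffix_bounds_general {T : Type*} [LinearOrder T] (a b : T → ℝ)
    (haf : (Function.support a).Finite) (hbf : (Function.support b).Finite)
    (hωa : 0 < ∑ᶠ t, a t) (hωb : 0 < ∑ᶠ t, b t)
    (τ : ℝ) (hτ0 : 0 < τ) (hτ1 : τ ≤ 1)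
    (t₀ : T)
    (hpre : ∀ s, s < t₀ → min (a s) (b s) = 0)
    (h : τ ≤ 2 * (∑ᶠ t, min (a t) (b t)) / ((∑ᶠ t, a t) + (∑ᶠ t, b t))) :
    (τ / (2 - τ)) * ((∑ᶠ t, a t) + (∑ᶠ s ∈ Set.Iio t₀, b s)) ≤
        (∑ᶠ s ∈ Set.Ici t₀, b s) ∧
      (∑ᶠ s ∈ Set.Ici t₀, b s) ≤
        ((2 - τ) / τ) * (∑ᶠ s ∈ Set.Ici t₀, a s) - (∑ᶠ s ∈ Set.Iio t₀, a s) -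
          (∑ᶠ s ∈ Set.Iio t₀, b s) := by
  have hdice := (le_div_iff₀ (add_pos hωa hωb)).1 h
  have hIa := finsum_min_le_finsum_mem_Ici_left haf hbf hpre
  have hIb := finsum_min_le_finsum_mem_Ici_right haf hbf hpre
  rw [finsum_eq_finsum_mem_Iio_add_finsum_mem_Ici hbf t₀] at hdice
  rw [finsum_eq_finsum_mem_Iio_add_finsum_mem_Ici haf t₀] at hdice ⊢
  constructor
  · rw [div_mul_eq_mul_div, div_le_iff₀ (by linarith)]
    linarith
  · rw [div_mul_eq_mul_div, sub_sub, le_sub_iff_add_le, le_div_iff₀ hτ0]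
    linarith

/-- Position-enhanced index suffix bounds for weighted Dice (PPS filter). -/
theorem pps_dice_suffix_bounds {T : Type*} [LinearOrder T] (a b : T → ℝ)
    (haf : (Function.support a).Finite) (hbf : (Function.support b).Finite)
    (ha0 : ∀ t, 0 ≤ a t) (hb0 : ∀ t, 0 ≤ b t)
    (hωa : 0 < ∑ᶠ t, a t) (hωb : 0 < ∑ᶠ t, b t)
    (τ : ℝ) (hτ0 : 0 < τ) (hτ1 : τ ≤ 1)
    (t₀ : T) (hat : 0 < a t₀) (hbt : 0 < b t₀)
    (hpre : ∀ s, s < t₀ → min (a s) (b s) = 0)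
    (h : τ ≤ 2 * (∑ᶠ t, min (a t) (b t)) / ((∑ᶠ t, a t) + (∑ᶠ t, b t))) :
    (τ / (2 - τ)) * ((∑ᶠ t, a t) + (∑ᶠ s ∈ Set.Iio t₀, b s)) ≤
        (∑ᶠ s ∈ Set.Ici t₀, b s) ∧
      (∑ᶠ s ∈ Set.Ici t₀, b s) ≤
        ((2 - τ) / τ) * (∑ᶠ s ∈ Set.Ici t₀, a s) - (∑ᶠ s ∈ Set.Iio t₀, a s) -
          (∑ᶠ s ∈ Set.Iio t₀, b s) :=
  pps_dice_suffix_bounds_general a b haf hbf hωa hωb τ hτ0 hτ1 t₀ hpre h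
end

section
/- Let a and b be weighted token sets over a linearly ordered token type with Σ_t a(t)² = 1 and Σ_t b(t)² = 1, let 0 < τ ≤ 1 be a real number, and let t₀ be a token such that a(s) · b(s) = 0 for all s < t₀. Write s_a = Σ_{s ≥ t₀} a(s)² and s_b = Σ_{s ≥ t₀} b(s)², and suppose s_a > 0. If Σ_t a(t) · b(t) ≥ τ, then s_b ≥ τ² / s_a. -/
/-!
Since `a` and `b` share no token below `t₀`, the whole dot product is carried by the suffixes
starting at `t₀`; Cauchy–Schwarz on those suffixes gives `τ² ≤ (a · b)² ≤ s_a · s_b`.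
-/

open Function

section CauchySchwarz

variable {α R : Type*} [CommSemiring R] [LinearOrder R] [IsStrictOrderedRing R] [ExistsAddOfLE R]
  {f g : α → R}

theorem finsum_mul_sq_le_sq_mul_sq (hf : f.support.Finite) (hg : g.support.Finite) :
    (∑ᶠ x, f x * g x) ^ 2 ≤ (∑ᶠ x, f x ^ 2) * ∑ᶠ x, g x ^ 2 := by
  have hu : f.support ∪ g.support ⊆ (hf.union hg).toFinset := (hf.union hg).coe_toFinset.ge
  rw [finsum_eq_sum_of_support_subset (fun x ↦ f x * g x)
      ((support_mul_subset_left f g).trans (Set.subset_union_left.trans hu)),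
    finsum_eq_sum_of_support_subset (fun x ↦ f x ^ 2)
      ((support_pow f two_ne_zero).trans_subset (Set.subset_union_left.trans hu)),
    finsum_eq_sum_of_support_subset (fun x ↦ g x ^ 2)
      ((support_pow g two_ne_zero).trans_subset (Set.subset_union_right.trans hu))]
  exact Finset.sum_mul_sq_le_sq_mul_sq _ f g

theorem finsum_mem_mul_sq_le_sq_mul_sq {s : Set α} (hf : (s ∩ f.support).Finite)
    (hg : (s ∩ g.support).Finite) :
    (∑ᶠ x ∈ s, f x * g x) ^ 2 ≤ (∑ᶠ x ∈ s, f x ^ 2) * ∑ᶠ x ∈ s, g x ^ 2 := by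
  simpa only [finsum_mem_def, sq, Set.indicator_mul] using
    finsum_mul_sq_le_sq_mul_sq (Set.support_indicator (f := f) ▸ hf)
      (Set.support_indicator (f := g) ▸ hg)

end CauchySchwarz

theorem finsum_mem_eq_finsum_of_support_subset {α M : Type*} [AddCommMonoid M] {f : α → M}
    {s : Set α} (h : f.support ⊆ s) : ∑ᶠ x ∈ s, f x = ∑ᶠ x, f x :=
  (finsum_mem_inter_support_eq' f s _ fun _ hx ↦ iff_of_true (h hx) trivial).trans
    (finsum_mem_univ f)

theorem pps_cosine_suffix_bound_general {T : Type*} [LinearOrder T] (a b : T → ℝ)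
    (haf : (Function.support a).Finite) (hbf : (Function.support b).Finite)
    (τ : ℝ) (hτ0 : 0 < τ)
    (t₀ : T) (hpre : ∀ s, s < t₀ → a s * b s = 0)
    (hsa : 0 < ∑ᶠ s ∈ Set.Ici t₀, (a s) ^ 2)
    (h : τ ≤ ∑ᶠ t, a t * b t) :
    τ ^ 2 / (∑ᶠ s ∈ Set.Ici t₀, (a s) ^ 2) ≤ ∑ᶠ s ∈ Set.Ici t₀, (b s) ^ 2 := by
  have hsuffix : ∑ᶠ s ∈ Set.Ici t₀, a s * b s = ∑ᶠ t, a t * b t :=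
    finsum_mem_eq_finsum_of_support_subset fun s hs ↦ not_lt.mp fun hlt ↦ hs (hpre s hlt)
  rw [div_le_iff₀ hsa, mul_comm]
  calc τ ^ 2 ≤ (∑ᶠ s ∈ Set.Ici t₀, a s * b s) ^ 2 := by
        rw [hsuffix]; exact pow_le_pow_left₀ hτ0.le h 2
    _ ≤ _ := finsum_mem_mul_sq_le_sq_mul_sq (haf.inter_of_right _) (hbf.inter_of_right _)

/-- Position-enhanced index suffix lower bound for Cosine (PPS filter). -/
theorem pps_cosine_suffix_bound {T : Type*} [LinearOrder T] (a b : T → ℝ)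
    (haf : (Function.support a).Finite) (hbf : (Function.support b).Finite)
    (ha0 : ∀ t, 0 ≤ a t) (hb0 : ∀ t, 0 ≤ b t)
    (ha2 : (∑ᶠ t, (a t) ^ 2) = 1) (hb2 : (∑ᶠ t, (b t) ^ 2) = 1)
    (τ : ℝ) (hτ0 : 0 < τ) (hτ1 : τ ≤ 1)
    (t₀ : T) (hpre : ∀ s, s < t₀ → a s * b s = 0)
    (hsa : 0 < ∑ᶠ s ∈ Set.Ici t₀, (a s) ^ 2)
    (h : τ ≤ ∑ᶠ t, a t * b t) :
    τ ^ 2 / (∑ᶠ s ∈ Set.Ici t₀, (a s) ^ 2) ≤ ∑ᶠ s ∈ Set.Ici t₀, (b s) ^ 2 :=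
  pps_cosine_suffix_bound_general a b haf hbf τ hτ0 t₀ hpre hsa h
end
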